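/- arXiv:2406.09083 — 2 statements merged into one kernel-verified Lean document; each statement's English description precedes it below -/
import Mathlib

section
/- Let a be an even positive integer. The Octopus position [1^a | 1^a] with finger count 2 is an N-position: whichever player moves first has a winning strategy. -/
namespace Octopus

/-- An Octopus position: the multiset of Left's hand values and the
multiset of Right's hand values. -/
abbrev Pos : Type := Multiset ℕ × Multiset ℕ

/-- All hand values lie in `{1, ..., n}`, where `n` is the finger count. -/
def Valid (n : ℕ) (P : Pos) : Prop :=
  (∀ x ∈ P.1, 1 ≤ x ∧ x ≤ n) ∧ (∀ y ∈ P.2, 1 ≤ y ∧ y ≤ n)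

/-- A move of Left with finger count `n`: Left chooses an attacking hand `x` in
her multiset and a target hand `y` in Right's multiset; that copy of `y` is
replaced by `x + y`, or removed from play if `x + y > n`. -/
def LeftMove (n : ℕ) (P Q : Pos) : Prop :=
  ∃ x ∈ P.1, ∃ y ∈ P.2,
    Q.1 = P.1 ∧
    Q.2 = if x + y ≤ n then (x + y) ::ₘ P.2.erase y else P.2.erase y

/-- A move of Right with finger count `n`: Right chooses an attacking hand `y` in
his multiset and a target hand `x` in Left's multiset; that copy of `x` is
replaced by `x + y`, or removed from play if `x + y > n`. -/
def RightMove (n : ℕ) (P Q : Pos) : Prop :=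
  ∃ x ∈ P.1, ∃ y ∈ P.2,
    Q.2 = P.2 ∧
    Q.1 = if x + y ≤ n then (x + y) ::ₘ P.1.erase x else P.1.erase x

/-- `LeftWinsFirst n P`: Left, moving first from `P`, has a winning strategy
(normal play: a player with no move on their turn loses). -/
inductive LeftWinsFirst (n : ℕ) : Pos → Prop
  | intro (P Q : Pos) (hmove : LeftMove n P Q)
      (hwin : ∀ R, RightMove n Q R → LeftWinsFirst n R) : LeftWinsFirst n P

/-- `RightWinsFirst n P`: Right, moving first from `P`, has a winning strategy. -/
inductive RightWinsFirst (n : ℕ) : Pos → Prop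
  | intro (P Q : Pos) (hmove : RightMove n P Q)
      (hwin : ∀ R, LeftMove n Q R → RightWinsFirst n R) : RightWinsFirst n P

/-- Left, moving second from `P`, has a winning strategy. -/
def LeftWinsSecond (n : ℕ) (P : Pos) : Prop :=
  ∀ Q, RightMove n P Q → LeftWinsFirst n Q

/-- Right, moving second from `P`, has a winning strategy. -/
def RightWinsSecond (n : ℕ) (P : Pos) : Prop :=
  ∀ Q, LeftMove n P Q → RightWinsFirst n Q

/-- `N`-position: whichever player moves first wins. -/
def NPos (n : ℕ) (P : Pos) : Prop := LeftWinsFirst n P ∧ RightWinsFirst n P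

/-- `P`-position: whichever player moves second wins. -/
def PPos (n : ℕ) (P : Pos) : Prop := LeftWinsSecond n P ∧ RightWinsSecond n P

/-- `L`-position: Left wins whoever moves first. -/
def LPos (n : ℕ) (P : Pos) : Prop := LeftWinsFirst n P ∧ LeftWinsSecond n P

/-- `R`-position: Right wins whoever moves first. -/
def RPos (n : ℕ) (P : Pos) : Prop := RightWinsFirst n P ∧ RightWinsSecond n P

/-- The position `[1^a, 2^b | 1^c, 2^d]` (used with finger count 2). -/
def two (a b c d : ℕ) : Pos :=
  (Multiset.replicate a 1 + Multiset.replicate b 2,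
   Multiset.replicate c 1 + Multiset.replicate d 2)

/-! ### Auxiliary development -/

/-- Parity correction term for the winning criterion. -/
def corr (c d : ℕ) : ℕ := if c = 0 then d % 2 else 0

/-- The mover (with `b` ones, `c` twos) wins against opponent (with `d` ones,
`e` twos), finger count 2. -/
def Win (b c d e : ℕ) : Prop :=
  0 < d + e ∧
    ((e = 0 ∧ d + b % 2 + corr c d ≤ b + c) ∨ (0 < e ∧ d + e ≤ b + c + corr c d))

lemma strat {b c d e : ℕ} (h : Win b c d e) :
    (0 < b ∧ 0 < d ∧ ¬ Win (d-1) (e+1) b c) ∨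
    (0 < b ∧ 0 < e ∧ ¬ Win d (e-1) b c) ∨
    (0 < c ∧ 0 < d ∧ ¬ Win (d-1) e b c) ∨
    (0 < c ∧ 0 < e ∧ ¬ Win d (e-1) b c) := by
  unfold Win corr at *
  split_ifs at * <;> omega

lemma forced1 {r s p q : ℕ} (h : ¬ Win r s p q) (hr : 0 < r) (hp : 0 < p) :
    Win (p-1) (q+1) r s := by
  unfold Win corr at *; split_ifs at * <;> omega

lemma forced2 {r s p q : ℕ} (h : ¬ Win r s p q) (hr : 0 < r) (hq : 0 < q) :
    Win p (q-1) r s := by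
  unfold Win corr at *; split_ifs at * <;> omega

lemma forced3 {r s p q : ℕ} (h : ¬ Win r s p q) (hs : 0 < s) (hp : 0 < p) :
    Win (p-1) q r s := by
  unfold Win corr at *; split_ifs at * <;> omega

lemma forced4 {r s p q : ℕ} (h : ¬ Win r s p q) (hs : 0 < s) (hq : 0 < q) :
    Win p (q-1) r s := by
  unfold Win corr at *; split_ifs at * <;> omega

lemma mem_rep_one {b c : ℕ} (hb : 0 < b) :
    (1:ℕ) ∈ Multiset.replicate b 1 + Multiset.replicate c 2 :=
  Multiset.mem_add.2 (Or.inl (Multiset.mem_replicate.2 ⟨hb.ne', rfl⟩))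

lemma mem_rep_two {b c : ℕ} (hc : 0 < c) :
    (2:ℕ) ∈ Multiset.replicate b 1 + Multiset.replicate c 2 :=
  Multiset.mem_add.2 (Or.inr (Multiset.mem_replicate.2 ⟨hc.ne', rfl⟩))

lemma mem_rep_cases {x b c : ℕ}
    (h : x ∈ Multiset.replicate b 1 + Multiset.replicate c 2) :
    (x = 1 ∧ 0 < b) ∨ (x = 2 ∧ 0 < c) := by
  rcases Multiset.mem_add.1 h with h | h
  · exact Or.inl ⟨(Multiset.mem_replicate.1 h).2,
      Nat.pos_of_ne_zero (Multiset.mem_replicate.1 h).1⟩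
  · exact Or.inr ⟨(Multiset.mem_replicate.1 h).2,
      Nat.pos_of_ne_zero (Multiset.mem_replicate.1 h).1⟩

lemma erase_rep_one {b c : ℕ} (hb : 0 < b) :
    (Multiset.replicate b 1 + Multiset.replicate c 2).erase 1
      = Multiset.replicate (b-1) 1 + Multiset.replicate c 2 := by
  obtain ⟨b, rfl⟩ := Nat.exists_eq_succ_of_ne_zero hb.ne'
  rw [Multiset.replicate_succ, Multiset.cons_add, Multiset.erase_cons_head]
  simp

lemma erase_rep_two {b c : ℕ} (hc : 0 < c) :
    (Multiset.replicate b 1 + Multiset.replicate c 2).erase 2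
      = Multiset.replicate b 1 + Multiset.replicate (c-1) 2 := by
  obtain ⟨c, rfl⟩ := Nat.exists_eq_succ_of_ne_zero hc.ne'
  rw [Multiset.replicate_succ, Multiset.add_cons, Multiset.erase_cons_head]
  simp [Multiset.add_cons]

lemma leftMove_11 {b c d e : ℕ} (hb : 0 < b) (hd : 0 < d) :
    LeftMove 2 (two b c d e) (two b c (d-1) (e+1)) := by
  refine ⟨1, mem_rep_one hb, 1, mem_rep_one hd, rfl, ?_⟩
  norm_num [two, erase_rep_one hd, Multiset.replicate_succ, Multiset.add_cons]

lemma leftMove_12 {b c d e : ℕ} (hb : 0 < b) (he : 0 < e) :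
    LeftMove 2 (two b c d e) (two b c d (e-1)) := by
  refine ⟨1, mem_rep_one hb, 2, mem_rep_two he, rfl, ?_⟩
  norm_num [two, erase_rep_two he]

lemma leftMove_21 {b c d e : ℕ} (hc : 0 < c) (hd : 0 < d) :
    LeftMove 2 (two b c d e) (two b c (d-1) e) := by
  refine ⟨2, mem_rep_two hc, 1, mem_rep_one hd, rfl, ?_⟩
  norm_num [two, erase_rep_one hd]

lemma leftMove_22 {b c d e : ℕ} (hc : 0 < c) (he : 0 < e) :
    LeftMove 2 (two b c d e) (two b c d (e-1)) := by
  refine ⟨2, mem_rep_two hc, 2, mem_rep_two he, rfl, ?_⟩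
  norm_num [two, erase_rep_two he]

lemma rightMove_cases {b c d e : ℕ} {Q : Pos}
    (h : RightMove 2 (two b c d e) Q) :
    (0 < d ∧ 0 < b ∧ Q = two (b-1) (c+1) d e) ∨
    (0 < d ∧ 0 < c ∧ Q = two b (c-1) d e) ∨
    (0 < e ∧ 0 < b ∧ Q = two (b-1) c d e) ∨
    (0 < e ∧ 0 < c ∧ Q = two b (c-1) d e) := by
  obtain ⟨Q1, Q2⟩ := Q
  obtain ⟨x, hx, y, hy, h2, h1⟩ := h
  simp only at h1 h2
  subst h2
  rcases mem_rep_cases hx with ⟨rfl, hb⟩ | ⟨rfl, hc⟩ <;>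
    rcases mem_rep_cases hy with ⟨rfl, hd⟩ | ⟨rfl, he⟩
  · -- x = 1, y = 1 : Left's 1 becomes 2
    refine Or.inl ⟨hd, hb, ?_⟩
    norm_num [two] at h1 ⊢
    rw [h1, erase_rep_one hb]
  · -- x = 1, y = 2 : Left's 1 removed
    refine Or.inr (Or.inr (Or.inl ⟨he, hb, ?_⟩))
    norm_num [two] at h1 ⊢
    rw [h1, erase_rep_one hb]
  · -- x = 2, y = 1 : Left's 2 removed
    refine Or.inr (Or.inl ⟨hd, hc, ?_⟩)
    norm_num [two] at h1 ⊢
    rw [h1, erase_rep_two hc]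
  · -- x = 2, y = 2 : Left's 2 removed
    refine Or.inr (Or.inr (Or.inr ⟨he, hc, ?_⟩))
    norm_num [two] at h1 ⊢
    rw [h1, erase_rep_two hc]

lemma main (m b c d e : ℕ) (hm : 2*b + c + 2*d + e ≤ m) (hw : Win b c d e) :
    LeftWinsFirst 2 (two b c d e) := by
  induction m using Nat.strong_induction_on generalizing b c d e with
  | _ m ih =>
  have hRight : ∀ d' e', 2*d' + e' + 1 ≤ 2*d + e → ¬ Win d' e' b c →
      ∀ R, RightMove 2 (two b c d' e') R → LeftWinsFirst 2 R := by
    intro d' e' hde hnw R hR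
    rcases rightMove_cases hR with ⟨hd', hb', rfl⟩ | ⟨hd', hc', rfl⟩ |
      ⟨he', hb', rfl⟩ | ⟨he', hc', rfl⟩
    · exact ih (m-1) (by omega) _ _ _ _ (by omega) (forced1 hnw hd' hb')
    · exact ih (m-1) (by omega) _ _ _ _ (by omega) (forced2 hnw hd' hc')
    · exact ih (m-1) (by omega) _ _ _ _ (by omega) (forced3 hnw he' hb')
    · exact ih (m-1) (by omega) _ _ _ _ (by omega) (forced4 hnw he' hc')
  rcases strat hw with ⟨hb, hd, hnw⟩ | ⟨hb, he, hnw⟩ | ⟨hc, hd, hnw⟩ |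
    ⟨hc, he, hnw⟩
  · exact .intro _ _ (leftMove_11 hb hd) (hRight _ _ (by omega) hnw)
  · exact .intro _ _ (leftMove_12 hb he) (hRight _ _ (by omega) hnw)
  · exact .intro _ _ (leftMove_21 hc hd) (hRight _ _ (by omega) hnw)
  · exact .intro _ _ (leftMove_22 hc he) (hRight _ _ (by omega) hnw)

lemma swap_left_move {n : ℕ} {P Q : Pos} (h : LeftMove n P Q) :
    RightMove n (P.2, P.1) (Q.2, Q.1) := by
  obtain ⟨x, hx, y, hy, h1, h2⟩ := h
  exact ⟨y, hy, x, hx, h1, by rw [h2, Nat.add_comm y x]⟩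

lemma swap_right_move {n : ℕ} {P Q : Pos} (h : RightMove n P Q) :
    LeftMove n (P.2, P.1) (Q.2, Q.1) := by
  obtain ⟨x, hx, y, hy, h2, h1⟩ := h
  exact ⟨y, hy, x, hx, h2, by rw [h1, Nat.add_comm y x]⟩

lemma left_to_right {n : ℕ} {P : Pos} (h : LeftWinsFirst n P) :
    RightWinsFirst n (P.2, P.1) := by
  induction h with
  | intro P Q hmove hwin ih =>
    refine .intro _ (Q.2, Q.1) (swap_left_move hmove) ?_
    intro R hR
    have hR' : RightMove n Q (R.2, R.1) := by
      have := swap_left_move (P := (Q.2, Q.1)) (Q := R) hR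
      simpa using this
    have := ih _ hR'
    simpa using this

/-- for even positive `a`, `[1^a | 1^a]` with finger count 2 is
an N-position. -/
theorem fingerTwo_initial_even (a : ℕ) (ha : 0 < a) (heven : Even a) :
    NPos 2 (Multiset.replicate a 1, Multiset.replicate a 1) := by
  obtain ⟨k, rfl⟩ := heven
  have hpos : (Multiset.replicate (k+k) 1, Multiset.replicate (k+k) 1)
      = two (k+k) 0 (k+k) 0 := by simp [two]
  have hw : Win (k+k) 0 (k+k) 0 := by
    unfold Win corr
    refine ⟨by omega, Or.inl ⟨rfl, ?_⟩⟩
    norm_num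
    omega
  have hL : LeftWinsFirst 2 (two (k+k) 0 (k+k) 0) := main _ _ _ _ _ le_rfl hw
  refine hpos ▸ ⟨hL, ?_⟩
  have := left_to_right hL
  simpa [two] using this

end Octopus
end

section
/- Let c and d be nonnegative integers with d ≥ 1 and c odd, and let a = c + d. Then the Octopus position [1^a | 1^c, 2^d] with finger count 2 is an L-position: Left has a winning strategy whoever moves first. -/
namespace Octopus

def R2 (m n : ℕ) : Multiset ℕ := Multiset.replicate m 1 + Multiset.replicate n 2

lemma mem_R2 {x m n : ℕ} : x ∈ R2 m n ↔ (x = 1 ∧ 1 ≤ m) ∨ (x = 2 ∧ 1 ≤ n) := by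
  simp [R2, Multiset.mem_replicate]
  constructor
  · rintro (⟨h1,h2⟩|⟨h1,h2⟩) <;> [left; right] <;> omega
  · rintro (⟨h1,h2⟩|⟨h1,h2⟩) <;> [left; right] <;> omega

lemma repl_succ (m : ℕ) (x : ℕ) (h : 1 ≤ m) :
    Multiset.replicate m x = x ::ₘ Multiset.replicate (m-1) x := by
  obtain ⟨k, rfl⟩ : ∃ k, m = k + 1 := ⟨m - 1, by omega⟩
  simp [Multiset.replicate_succ]

lemma erase1_R2 {m n : ℕ} (h : 1 ≤ m) : (R2 m n).erase 1 = R2 (m-1) n := by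
  rw [R2, Multiset.erase_add_left_pos _ (by simp [Multiset.mem_replicate]; omega),
    repl_succ m 1 h, Multiset.erase_cons_head]; rfl

lemma erase2_R2 {m n : ℕ} (h : 1 ≤ n) : (R2 m n).erase 2 = R2 m (n-1) := by
  rw [R2, Multiset.erase_add_right_pos _ (by simp [Multiset.mem_replicate]; omega),
    repl_succ n 2 h, Multiset.erase_cons_head]; rfl

lemma cons1_R2 (m n : ℕ) : 1 ::ₘ R2 m n = R2 (m+1) n := by
  rw [R2, ← Multiset.cons_add, ← Multiset.replicate_succ]; rfl

lemma cons2_R2 (m n : ℕ) : 2 ::ₘ R2 m n = R2 m (n+1) := by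
  rw [R2, add_comm, ← Multiset.cons_add, ← Multiset.replicate_succ, add_comm]; rfl

lemma two_eq (a b c d : ℕ) : two a b c d = (R2 a b, R2 c d) := rfl

lemma rightMove_inv {a b c d : ℕ} {Q : Pos} (h : RightMove 2 (two a b c d) Q) :
    (1 ≤ a ∧ 1 ≤ c ∧ Q = two (a-1) (b+1) c d) ∨
    (1 ≤ a ∧ 1 ≤ d ∧ Q = two (a-1) b c d) ∨
    (1 ≤ b ∧ (1 ≤ c ∨ 1 ≤ d) ∧ Q = two a (b-1) c d) := by
  obtain ⟨x, hx, y, hy, hQ2, hQ1⟩ := h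
  rw [show (two a b c d).1 = R2 a b from rfl] at hx hQ1
  rw [show (two a b c d).2 = R2 c d from rfl] at hy hQ2
  have hx' := mem_R2.1 hx
  have hy' := mem_R2.1 hy
  have hQ : Q = (Q.1, Q.2) := rfl
  rcases hx' with ⟨rfl, ha⟩ | ⟨rfl, hb⟩ <;> rcases hy' with ⟨rfl, hc⟩ | ⟨rfl, hd⟩
  · left; refine ⟨ha, hc, ?_⟩
    rw [hQ, hQ1, hQ2, if_pos (by norm_num), erase1_R2 ha, cons2_R2, two_eq]
  · right; left; refine ⟨ha, hd, ?_⟩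
    rw [hQ, hQ1, hQ2, if_neg (by norm_num), erase1_R2 ha, two_eq]
  · right; right; refine ⟨hb, Or.inl hc, ?_⟩
    rw [hQ, hQ1, hQ2, if_neg (by norm_num), erase2_R2 hb, two_eq]
  · right; right; refine ⟨hb, Or.inr hd, ?_⟩
    rw [hQ, hQ1, hQ2, if_neg (by norm_num), erase2_R2 hb, two_eq]

lemma leftMove_a1c {a b c d : ℕ} (ha : 1 ≤ a) (hc : 1 ≤ c) :
    LeftMove 2 (two a b c d) (two a b (c-1) (d+1)) := by
  refine ⟨1, mem_R2.2 (Or.inl ⟨rfl, ha⟩), 1, mem_R2.2 (Or.inl ⟨rfl, hc⟩), rfl, ?_⟩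
  rw [show (two a b c d).2 = R2 c d from rfl, if_pos (by norm_num), erase1_R2 hc, cons2_R2]
  rfl

lemma leftMove_a1d {a b c d : ℕ} (ha : 1 ≤ a) (hd : 1 ≤ d) :
    LeftMove 2 (two a b c d) (two a b c (d-1)) := by
  refine ⟨1, mem_R2.2 (Or.inl ⟨rfl, ha⟩), 2, mem_R2.2 (Or.inr ⟨rfl, hd⟩), rfl, ?_⟩
  rw [show (two a b c d).2 = R2 c d from rfl, if_neg (by norm_num), erase2_R2 hd]; rfl

lemma leftMove_b2c {a b c d : ℕ} (hb : 1 ≤ b) (hc : 1 ≤ c) :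
    LeftMove 2 (two a b c d) (two a b (c-1) d) := by
  refine ⟨2, mem_R2.2 (Or.inr ⟨rfl, hb⟩), 1, mem_R2.2 (Or.inl ⟨rfl, hc⟩), rfl, ?_⟩
  rw [show (two a b c d).2 = R2 c d from rfl, if_neg (by norm_num), erase1_R2 hc]; rfl

lemma leftMove_b2d {a b c d : ℕ} (hb : 1 ≤ b) (hd : 1 ≤ d) :
    LeftMove 2 (two a b c d) (two a b c (d-1)) := by
  refine ⟨2, mem_R2.2 (Or.inr ⟨rfl, hb⟩), 2, mem_R2.2 (Or.inr ⟨rfl, hd⟩), rfl, ?_⟩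
  rw [show (two a b c d).2 = R2 c d from rfl, if_neg (by norm_num), erase2_R2 hd]; rfl

def F (a b c d : ℕ) : Prop :=
  (1 ≤ d ∧ (c + d ≤ a + b ∨ (c % 2 = 1 ∧ c + d ≤ a + 1))) ∨
  (d = 0 ∧ 1 ≤ c ∧ c + (c + b) % 2 ≤ a + b)

def S (a b c d : ℕ) : Prop :=
  (1 ≤ c → 1 ≤ a → F (a-1) (b+1) c d) ∧
  (1 ≤ d → 1 ≤ a → F (a-1) b c d) ∧
  (1 ≤ c → 1 ≤ b → F a (b-1) c d) ∧
  (1 ≤ d → 1 ≤ b → F a (b-1) c d)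

lemma key {a b c d : ℕ} (h : F a b c d) :
    (1 ≤ a ∧ 1 ≤ c ∧ S a b (c-1) (d+1)) ∨
    (1 ≤ a ∧ 1 ≤ d ∧ S a b c (d-1)) ∨
    (1 ≤ b ∧ 1 ≤ c ∧ S a b (c-1) d) ∨
    (1 ≤ b ∧ 1 ≤ d ∧ S a b c (d-1)) := by
  unfold F at h
  by_cases hd : 1 ≤ d
  · by_cases hI : c + d ≤ a + b
    · by_cases hsp : d = 1 ∧ 1 ≤ b ∧ 1 ≤ c ∧ a + b = c + 1 ∧ (c + b) % 2 = 0
      · exact Or.inr (Or.inr (Or.inl ⟨by omega, by omega, by unfold S F; omega⟩))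
      · by_cases hb : 1 ≤ b
        · exact Or.inr (Or.inr (Or.inr ⟨hb, hd, by unfold S F; omega⟩))
        · exact Or.inr (Or.inl ⟨by omega, hd, by unfold S F; omega⟩)
    · exact Or.inr (Or.inl ⟨by omega, hd, by unfold S F; omega⟩)
  · by_cases hb : 1 ≤ b
    · exact Or.inr (Or.inr (Or.inl ⟨hb, by omega, by unfold S F; omega⟩))
    · exact Or.inl ⟨by omega, by omega, by unfold S F; omega⟩


lemma main_s11 : ∀ n a b c d : ℕ, 2*a+b+2*c+d ≤ n → F a b c d →
    LeftWinsFirst 2 (two a b c d) := by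
  intro n
  induction n using Nat.strong_induction_on with
  | _ n ih =>
    intro a b c d hm hF
    rcases key hF with ⟨ha,hc,hS⟩|⟨ha,hd,hS⟩|⟨hb,hc,hS⟩|⟨hb,hd,hS⟩
    · refine LeftWinsFirst.intro _ (two a b (c-1) (d+1)) (leftMove_a1c ha hc) ?_
      intro R hR
      rcases rightMove_inv hR with ⟨h1,h2,rfl⟩|⟨h1,h2,rfl⟩|⟨h1,h2,rfl⟩
      · exact ih (n-1) (by omega) _ _ _ _ (by omega) (hS.1 h2 h1)
      · exact ih (n-1) (by omega) _ _ _ _ (by omega) (hS.2.1 h2 h1)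
      · rcases h2 with h2|h2
        · exact ih (n-1) (by omega) _ _ _ _ (by omega) (hS.2.2.1 h2 h1)
        · exact ih (n-1) (by omega) _ _ _ _ (by omega) (hS.2.2.2 h2 h1)
    · refine LeftWinsFirst.intro _ (two a b c (d-1)) (leftMove_a1d ha hd) ?_
      intro R hR
      rcases rightMove_inv hR with ⟨h1,h2,rfl⟩|⟨h1,h2,rfl⟩|⟨h1,h2,rfl⟩
      · exact ih (n-1) (by omega) _ _ _ _ (by omega) (hS.1 h2 h1)
      · exact ih (n-1) (by omega) _ _ _ _ (by omega) (hS.2.1 h2 h1)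
      · rcases h2 with h2|h2
        · exact ih (n-1) (by omega) _ _ _ _ (by omega) (hS.2.2.1 h2 h1)
        · exact ih (n-1) (by omega) _ _ _ _ (by omega) (hS.2.2.2 h2 h1)
    · refine LeftWinsFirst.intro _ (two a b (c-1) d) (leftMove_b2c hb hc) ?_
      intro R hR
      rcases rightMove_inv hR with ⟨h1,h2,rfl⟩|⟨h1,h2,rfl⟩|⟨h1,h2,rfl⟩
      · exact ih (n-1) (by omega) _ _ _ _ (by omega) (hS.1 h2 h1)
      · exact ih (n-1) (by omega) _ _ _ _ (by omega) (hS.2.1 h2 h1)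
      · rcases h2 with h2|h2
        · exact ih (n-1) (by omega) _ _ _ _ (by omega) (hS.2.2.1 h2 h1)
        · exact ih (n-1) (by omega) _ _ _ _ (by omega) (hS.2.2.2 h2 h1)
    · refine LeftWinsFirst.intro _ (two a b c (d-1)) (leftMove_b2d hb hd) ?_
      intro R hR
      rcases rightMove_inv hR with ⟨h1,h2,rfl⟩|⟨h1,h2,rfl⟩|⟨h1,h2,rfl⟩
      · exact ih (n-1) (by omega) _ _ _ _ (by omega) (hS.1 h2 h1)
      · exact ih (n-1) (by omega) _ _ _ _ (by omega) (hS.2.1 h2 h1)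
      · rcases h2 with h2|h2
        · exact ih (n-1) (by omega) _ _ _ _ (by omega) (hS.2.2.1 h2 h1)
        · exact ih (n-1) (by omega) _ _ _ _ (by omega) (hS.2.2.2 h2 h1)


/-- for `d ≥ 1`, `c` odd and `a = c + d`, the position
`[1^a | 1^c, 2^d]` with finger count 2 is an L-position. -/
theorem fingerTwo_L_case (c d : ℕ) (hd : 1 ≤ d) (hc : Odd c) :
    LPos 2 (two (c + d) 0 c d) := by
  have hc2 : c % 2 = 1 := Nat.odd_iff.mp hc
  constructor
  · exact main_s11 _ _ _ _ _ le_rfl (Or.inl ⟨hd, Or.inl (by omega)⟩)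
  · intro Q hQ
    rcases rightMove_inv hQ with ⟨h1,h2,rfl⟩|⟨h1,h2,rfl⟩|⟨h1,h2,rfl⟩
    · exact main_s11 _ _ _ _ _ le_rfl (Or.inl ⟨hd, Or.inl (by omega)⟩)
    · exact main_s11 _ _ _ _ _ le_rfl (Or.inl ⟨hd, Or.inr ⟨hc2, by omega⟩⟩)
    · omega


end Octopus
end
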